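/- Let n ≥ 1 and let H be an operator on signals u : [0,∞) → ℝⁿ which is causal, maps L2 into L2, and maps L2e into L2e. Let a, b, c ∈ ℝ and suppose there exists ε > 0 with a ≤ −ε and c ≥ ε. Then the soft scaled graph of H is contained in S(a,b,c) (i.e. for every u ∈ L2 with u ≠ 0 and y = Hu, the gain-phase points ρ(u,y)·e^{±iθ(u,y)} lie in S(a,b,c)) if and only if the hard scaled graph of H is contained in S(a,b,c) (i.e. for every u ∈ L2e, every T > 0 with P_T u ≠ 0, and y = Hu, the gain-phase points ρ(P_T u, P_T y)·e^{±iθ(P_T u, P_T y)} lie in S(a,b,c)). -/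

import Mathlib

open MeasureTheory

noncomputable section

/-- A signal is a function `ℝ → ℝⁿ`; only its values on `[0,∞)` matter. -/
abbrev Signal (n : ℕ) := ℝ → EuclideanSpace ℝ (Fin n)

/-- Truncation `P_T u`: pointwise product of `u` with the indicator of `[0,T]`. -/
def trunc {n : ℕ} (T : ℝ) (u : Signal n) : Signal n :=
  (Set.Icc (0 : ℝ) T).indicator u

/-- `u ∈ L2`: a.e.-strongly measurable on `[0,∞)` with `∫₀^∞ ‖u(t)‖² dt < ∞`. -/
def InL2 {n : ℕ} (u : Signal n) : Prop :=
  AEStronglyMeasurable u (volume.restrict (Set.Ici (0 : ℝ))) ∧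
    Integrable (fun t => ‖u t‖ ^ 2) (volume.restrict (Set.Ici (0 : ℝ)))

/-- `u ∈ L2e`: every truncation of `u` lies in `L2`. -/
def InL2e {n : ℕ} (u : Signal n) : Prop :=
  ∀ T ≥ (0 : ℝ), InL2 (trunc T u)

/-- `H` is causal: `P_T (H u) = P_T (H (P_T u))` a.e., for all `T ≥ 0` and `u ∈ L2e`. -/
def Causal {n : ℕ} (H : Signal n → Signal n) : Prop :=
  ∀ T ≥ (0 : ℝ), ∀ u : Signal n, InL2e u →
    trunc T (H u) =ᵐ[volume] trunc T (H (trunc T u))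

/-- The `L2` norm of a signal, `‖u‖ = √(∫₀^∞ ‖u(t)‖² dt)`. -/
def L2norm {n : ℕ} (u : Signal n) : ℝ :=
  Real.sqrt (∫ t in Set.Ici (0 : ℝ), ‖u t‖ ^ 2)

/-- The `L2` inner product of two signals, `⟨u,y⟩ = ∫₀^∞ ⟨u(t),y(t)⟩ dt`. -/
def L2inner {n : ℕ} (u y : Signal n) : ℝ :=
  ∫ t in Set.Ici (0 : ℝ), (inner ℝ (u t) (y t) : ℝ)

/-- The gain `ρ(u,y) = ‖y‖/‖u‖`. -/
def gain {n : ℕ} (u y : Signal n) : ℝ := L2norm y / L2norm u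

/-- The phase `θ(u,y) = arccos(⟨u,y⟩/(‖u‖‖y‖))`, with `θ(u,y) = 0` when `y = 0`. -/
def phase {n : ℕ} (u y : Signal n) : ℝ :=
  if L2norm y = 0 then 0 else Real.arccos (L2inner u y / (L2norm u * L2norm y))

/-- The two gain-phase points `ρ(u,y)·e^{±iθ(u,y)}` contributed by the pair `(u,y)`. -/
def sgPoints {n : ℕ} (u y : Signal n) : Set ℂ :=
  {(gain u y : ℂ) * Complex.exp ((phase u y : ℂ) * Complex.I),
   (gain u y : ℂ) * Complex.exp (-((phase u y : ℂ) * Complex.I))}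

/-- The multiplier region `S(a,b,c) = {z ∈ ℂ : a|z|² + 2b·Re z + c ≥ 0}`. -/
def multiplierRegion (a b c : ℝ) : Set ℂ :=
  {z : ℂ | 0 ≤ a * ‖z‖ ^ 2 + 2 * b * z.re + c}


/-!
Both containments are statements about the sign of the quadratic form
`a‖y‖² + 2b⟨u,y⟩ + c‖u‖²`: dividing it by `‖u‖²` gives `a ρ² + 2b ρ cos θ + c`, so the points
`ρ e^{±iθ}` lie in `S(a,b,c)` exactly when the form is nonnegative.

Soft ⇒ hard: by causality `P_T H u = P_T H (P_T u)` a.e., and replacing `y = H (P_T u)` by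
`P_T y` keeps `⟨P_T u, y⟩` and can only shrink `‖y‖`, which raises the form because `a ≤ 0`.
Hard ⇒ soft: for `u ∈ L2` the form at `(P_T u, P_T H u)` converges to the form at `(u, H u)`
as `T → ∞`.
-/

/-- The quadratic form of the multiplier `[[c,b],[b,a]]` on the pair `(u,y)`. -/
def multiplierForm {n : ℕ} (a b c : ℝ) (u y : Signal n) : ℝ :=
  a * L2norm y ^ 2 + 2 * b * L2inner u y + c * L2norm u ^ 2

open Filter Topology Set

section Signals

variable {n : ℕ}

lemma L2norm_nonneg (u : Signal n) : 0 ≤ L2norm u := Real.sqrt_nonneg _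

lemma L2norm_sq (u : Signal n) : L2norm u ^ 2 = ∫ t in Ici (0 : ℝ), ‖u t‖ ^ 2 :=
  Real.sq_sqrt (integral_nonneg fun _ => sq_nonneg _)

lemma L2norm_pos {u : Signal n} (hu : L2norm u ≠ 0) : 0 < L2norm u :=
  (L2norm_nonneg u).lt_of_ne' hu

lemma norm_trunc_sq (T : ℝ) (u : Signal n) :
    (fun t => ‖trunc T u t‖ ^ 2) = (Icc 0 T).indicator fun t => ‖u t‖ ^ 2 := by
  ext t
  by_cases ht : t ∈ Icc (0 : ℝ) T <;> simp [trunc, ht]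

lemma InL2.trunc {u : Signal n} (hu : InL2 u) (T : ℝ) : InL2 (trunc T u) := by
  refine ⟨hu.1.indicator measurableSet_Icc, ?_⟩
  rw [norm_trunc_sq]
  exact hu.2.indicator measurableSet_Icc

lemma InL2.inL2e {u : Signal n} (hu : InL2 u) : InL2e u := fun T _ => hu.trunc T

lemma L2norm_congr_ae {y z : Signal n} (h : y =ᵐ[volume] z) : L2norm y = L2norm z :=
  congrArg Real.sqrt (integral_congr_ae (ae_restrict_of_ae (h.mono fun _ ht => by simp only [ht])))

lemma L2inner_congr_ae_right (u : Signal n) {y z : Signal n} (h : y =ᵐ[volume] z) :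
    L2inner u y = L2inner u z :=
  integral_congr_ae (ae_restrict_of_ae (h.mono fun _ ht => by simp only [ht]))

lemma sgPoints_congr_ae_right (u : Signal n) {y z : Signal n} (h : y =ᵐ[volume] z) :
    sgPoints u y = sgPoints u z := by
  simp only [sgPoints, gain, phase, L2norm_congr_ae h, L2inner_congr_ae_right u h]

lemma integrable_inner_of_inL2 {u y : Signal n} (hu : InL2 u) (hy : InL2 y) :
    Integrable (fun t => (inner ℝ (u t) (y t) : ℝ)) (volume.restrict (Ici (0 : ℝ))) := by
  refine (hu.2.add hy.2).mono' (hu.1.inner hy.1) (Eventually.of_forall fun t => ?_)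
  have := norm_inner_le_norm (𝕜 := ℝ) (u t) (y t)
  simp only [Pi.add_apply]
  nlinarith [sq_nonneg (‖u t‖ - ‖y t‖)]

/-- Cauchy–Schwarz, from the nonnegativity of the quadratic `x ↦ ‖u + x y‖²`. -/
lemma abs_L2inner_le {u y : Signal n} (hu : InL2 u) (hy : InL2 y) :
    |L2inner u y| ≤ L2norm u * L2norm y := by
  have hquad : ∀ x : ℝ,
      0 ≤ L2norm y ^ 2 * (x * x) + 2 * L2inner u y * x + L2norm u ^ 2 := by
    intro x
    have hexpand : (fun t => ‖u t + x • y t‖ ^ 2) = fun t =>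
        ‖u t‖ ^ 2 + (2 * x * (inner ℝ (u t) (y t) : ℝ) + x * x * ‖y t‖ ^ 2) := by
      funext t
      rw [norm_add_sq_real, real_inner_smul_right, norm_smul, Real.norm_eq_abs, mul_pow,
        sq_abs]
      ring
    have h1 := (integrable_inner_of_inL2 hu hy).const_mul (2 * x)
    have h2 := hy.2.const_mul (x * x)
    have h12 : Integrable (fun t => 2 * x * (inner ℝ (u t) (y t) : ℝ) + x * x * ‖y t‖ ^ 2)
      (volume.restrict (Ici (0 : ℝ))) := h1.add h2
    have h0 : 0 ≤ ∫ t in Ici (0 : ℝ), ‖u t + x • y t‖ ^ 2 :=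
      integral_nonneg fun _ => sq_nonneg _
    rw [hexpand, integral_add hu.2 h12, integral_add h1 h2, integral_const_mul,
      integral_const_mul] at h0
    rw [L2norm_sq, L2norm_sq, L2inner]
    linarith
  have hdisc := discrim_le_zero hquad
  rw [discrim] at hdisc
  rw [← abs_of_nonneg (mul_nonneg (L2norm_nonneg u) (L2norm_nonneg y))]
  exact sq_le_sq.mp (by nlinarith)

end Signals

section MultiplierRegion

lemma ofReal_mul_exp_mem_multiplierRegion_iff {a b c ρ : ℝ} (hρ : 0 ≤ ρ) (θ : ℝ) :
    (ρ : ℂ) * Complex.exp (θ * Complex.I) ∈ multiplierRegion a b c ↔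
      0 ≤ a * ρ ^ 2 + 2 * b * (ρ * Real.cos θ) + c := by
  rw [multiplierRegion, mem_ofPred_eq, norm_mul, Complex.norm_real, Complex.norm_exp_ofReal_mul_I,
    Complex.re_ofReal_mul, Complex.exp_ofReal_mul_I_re, Real.norm_of_nonneg hρ, mul_one]

variable {n : ℕ}

lemma sgPoints_subset_multiplierRegion_iff_gain_phase {a b c : ℝ} {u y : Signal n} :
    sgPoints u y ⊆ multiplierRegion a b c ↔
      0 ≤ a * gain u y ^ 2 + 2 * b * (gain u y * Real.cos (phase u y)) + c := by
  have hρ : 0 ≤ gain u y := div_nonneg (L2norm_nonneg y) (L2norm_nonneg u)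
  have hneg : -((phase u y : ℂ) * Complex.I) = ((-phase u y : ℝ) : ℂ) * Complex.I := by
    push_cast; ring
  rw [sgPoints, insert_subset_iff, singleton_subset_iff, hneg,
    ofReal_mul_exp_mem_multiplierRegion_iff hρ, ofReal_mul_exp_mem_multiplierRegion_iff hρ,
    Real.cos_neg, and_self]

lemma gain_mul_cos_phase {u y : Signal n} (hu : L2norm u ≠ 0)
    (hcs : |L2inner u y| ≤ L2norm u * L2norm y) :
    gain u y * Real.cos (phase u y) = L2inner u y / L2norm u ^ 2 := by
  by_cases hy : L2norm y = 0
  · rw [hy, mul_zero, abs_nonpos_iff] at hcs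
    simp [gain, phase, hy, hcs]
  · have hpos := mul_pos (L2norm_pos hu) (L2norm_pos hy)
    have hcos : |L2inner u y / (L2norm u * L2norm y)| ≤ 1 := by
      rw [abs_div, abs_of_pos hpos]
      exact div_le_one_of_le₀ hcs hpos.le
    obtain ⟨hlo, hhi⟩ := abs_le.mp hcos
    rw [gain, phase, if_neg hy, Real.cos_arccos hlo hhi]
    field_simp

lemma sgPoints_subset_multiplierRegion_iff {a b c : ℝ} {u y : Signal n} (hu : InL2 u)
    (hy : InL2 y) (hun : L2norm u ≠ 0) :
    sgPoints u y ⊆ multiplierRegion a b c ↔ 0 ≤ multiplierForm a b c u y := by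
  have hsq : 0 < L2norm u ^ 2 := pow_pos (L2norm_pos hun) 2
  have hform : a * gain u y ^ 2 + 2 * b * (gain u y * Real.cos (phase u y)) + c =
      multiplierForm a b c u y / L2norm u ^ 2 := by
    rw [gain_mul_cos_phase hun (abs_L2inner_le hu hy), gain, multiplierForm]
    field_simp
  rw [sgPoints_subset_multiplierRegion_iff_gain_phase, hform, div_nonneg_iff]
  constructor
  · rintro (⟨h, -⟩ | ⟨-, h⟩)
    · exact h
    · exact absurd h hsq.not_ge
  · exact fun h => Or.inl ⟨h, hsq.le⟩

end MultiplierRegion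

section Truncation

variable {n : ℕ}

lemma setIntegral_Ici_indicator_Icc (T : ℝ) (f : ℝ → ℝ) :
    ∫ t in Ici (0 : ℝ), (Icc 0 T).indicator f t = ∫ t in Icc (0 : ℝ) T, f t := by
  rw [setIntegral_indicator measurableSet_Icc, inter_eq_self_of_subset_right Icc_subset_Ici_self]

lemma L2norm_trunc_sq (T : ℝ) (u : Signal n) :
    L2norm (trunc T u) ^ 2 = ∫ t in Icc (0 : ℝ) T, ‖u t‖ ^ 2 := by
  rw [L2norm_sq, norm_trunc_sq]
  exact setIntegral_Ici_indicator_Icc T _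

lemma L2inner_trunc_trunc (T : ℝ) (u y : Signal n) :
    L2inner (trunc T u) (trunc T y) = ∫ t in Icc (0 : ℝ) T, (inner ℝ (u t) (y t) : ℝ) := by
  rw [L2inner, ← setIntegral_Ici_indicator_Icc]
  congr 1 with t
  by_cases ht : t ∈ Icc (0 : ℝ) T <;> simp [trunc, ht]

lemma L2inner_trunc_trunc_right (T : ℝ) (u y : Signal n) :
    L2inner (trunc T u) (trunc T y) = L2inner (trunc T u) y := by
  unfold L2inner
  congr 1 with t
  by_cases ht : t ∈ Icc (0 : ℝ) T <;> simp [trunc, ht]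

lemma L2norm_trunc_le (T : ℝ) {y : Signal n} (hy : InL2 y) : L2norm (trunc T y) ≤ L2norm y :=
  Real.sqrt_le_sqrt <| integral_mono (hy.trunc T).2 hy.2 fun t => by
    by_cases ht : t ∈ Icc (0 : ℝ) T <;> simp [trunc, ht]

lemma multiplierForm_le_trunc_right {a : ℝ} (ha : a ≤ 0) (b c T : ℝ) (u : Signal n)
    {y : Signal n} (hy : InL2 y) :
    multiplierForm a b c (trunc T u) y ≤ multiplierForm a b c (trunc T u) (trunc T y) := by
  have hle := L2norm_trunc_le T hy
  have hsq := pow_le_pow_left₀ (L2norm_nonneg _) hle 2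
  rw [multiplierForm, multiplierForm, L2inner_trunc_trunc_right]
  nlinarith

lemma tendsto_setIntegral_Icc_atTop {f : ℝ → ℝ} (hf : IntegrableOn f (Ici 0)) :
    Tendsto (fun T => ∫ t in Icc (0 : ℝ) T, f t) atTop (𝓝 (∫ t in Ici (0 : ℝ), f t)) := by
  rw [integral_Ici_eq_integral_Ioi]
  refine (intervalIntegral_tendsto_integral_Ioi 0 (hf.mono_set Ioi_subset_Ici_self)
    tendsto_id).congr' ?_
  filter_upwards [eventually_ge_atTop 0] with T hT
  rw [id, intervalIntegral.integral_of_le hT, integral_Icc_eq_integral_Ioc]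

lemma tendsto_L2norm_trunc_sq {u : Signal n} (hu : InL2 u) :
    Tendsto (fun T => L2norm (trunc T u) ^ 2) atTop (𝓝 (L2norm u ^ 2)) := by
  simp only [L2norm_trunc_sq]
  rw [L2norm_sq]
  exact tendsto_setIntegral_Icc_atTop hu.2

lemma tendsto_multiplierForm_trunc (a b c : ℝ) {u y : Signal n} (hu : InL2 u) (hy : InL2 y) :
    Tendsto (fun T => multiplierForm a b c (trunc T u) (trunc T y)) atTop
      (𝓝 (multiplierForm a b c u y)) := by
  have hinner : Tendsto (fun T => L2inner (trunc T u) (trunc T y)) atTop (𝓝 (L2inner u y)) := by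
    simp only [L2inner_trunc_trunc]
    exact tendsto_setIntegral_Icc_atTop (integrable_inner_of_inL2 hu hy)
  exact (((tendsto_L2norm_trunc_sq hy).const_mul a).add (hinner.const_mul (2 * b))).add
    ((tendsto_L2norm_trunc_sq hu).const_mul c)

end Truncation

theorem stmt1_general {n : ℕ} (H : Signal n → Signal n)
    (hcausal : Causal H)
    (hL2 : ∀ u, InL2 u → InL2 (H u))
    (a b c : ℝ) (hpn : ∃ ε > (0 : ℝ), a ≤ -ε ∧ ε ≤ c) :
    (∀ u : Signal n, InL2 u → L2norm u ≠ 0 →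
        sgPoints u (H u) ⊆ multiplierRegion a b c) ↔
    (∀ u : Signal n, InL2e u → ∀ T > (0 : ℝ), L2norm (trunc T u) ≠ 0 →
        sgPoints (trunc T u) (trunc T (H u)) ⊆ multiplierRegion a b c) := by
  obtain ⟨ε, hε, haε, -⟩ := hpn
  constructor
  · intro hsoft u hu T hT hTu
    have hv := hu T hT.le
    have hy := hL2 _ hv
    rw [sgPoints_congr_ae_right _ (hcausal T hT.le u hu),
      sgPoints_subset_multiplierRegion_iff hv (hy.trunc T) hTu]
    exact ((sgPoints_subset_multiplierRegion_iff hv hy hTu).mp (hsoft _ hv hTu)).trans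
      (multiplierForm_le_trunc_right (by linarith) b c T u hy)
  · intro hhard u hu hun
    have hy := hL2 u hu
    rw [sgPoints_subset_multiplierRegion_iff hu hy hun]
    have htrunc_ne : ∀ᶠ T in atTop, L2norm (trunc T u) ^ 2 ≠ 0 :=
      (tendsto_L2norm_trunc_sq hu).eventually_ne (pow_ne_zero 2 hun)
    refine ge_of_tendsto (tendsto_multiplierForm_trunc a b c hu hy) ?_
    filter_upwards [htrunc_ne, eventually_gt_atTop 0] with T hT hT0
    have hT' := (pow_ne_zero_iff two_ne_zero).mp hT
    exact (sgPoints_subset_multiplierRegion_iff (hu.trunc T) (hy.trunc T) hT').mp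
      (hhard u hu.inL2e T hT0 hT')

/-- Soft–hard scaled graph containment equivalence: for a causal, `L2`-stable `H` and a
positive-negative multiplier `[[a,b],[b,c]]`, the soft SG of `H` lies in `S(a,b,c)` iff
the hard SG of `H` lies in `S(a,b,c)`. -/
theorem stmt1 {n : ℕ} (hn : 1 ≤ n) (H : Signal n → Signal n)
    (hcausal : Causal H)
    (hL2 : ∀ u, InL2 u → InL2 (H u))
    (hL2e : ∀ u, InL2e u → InL2e (H u))
    (a b c : ℝ) (hpn : ∃ ε > (0 : ℝ), a ≤ -ε ∧ ε ≤ c) :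
    (∀ u : Signal n, InL2 u → L2norm u ≠ 0 →
        sgPoints u (H u) ⊆ multiplierRegion a b c) ↔
    (∀ u : Signal n, InL2e u → ∀ T > (0 : ℝ), L2norm (trunc T u) ≠ 0 →
        sgPoints (trunc T u) (trunc T (H u)) ⊆ multiplierRegion a b c) :=
  stmt1_general H hcausal hL2 a b c hpn
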